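/- arXiv:1104.3531 — 2 statements merged into one kernel-verified Lean document; each statement's English description precedes it below -/
import Mathlib

section
/- Let m be a natural number and let α = 1/(m+1) or α = -1/(m+1). Then det_α(A) ≥ 0 for every complex Hermitian positive semidefinite matrix A of every size. -/
open ComplexOrder

/-- The number of disjoint cycles of a permutation, counting fixed points as cycles. -/
noncomputable def cycleCount {ι : Type*} [Fintype ι] [DecidableEq ι] (σ : Equiv.Perm ι) : ℕ :=
  (Fintype.card ι - σ.cycleType.sum) + Multiset.card σ.cycleType

/-- The α-determinant: `det_α(A) = ∑_{σ} α^{n - c(σ)} ∏_i a_{i σ(i)}`. -/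
noncomputable def detAlpha {ι : Type*} [Fintype ι] [DecidableEq ι] {R : Type*} [CommRing R]
    (α : R) (A : Matrix ι ι R) : R :=
  ∑ σ : Equiv.Perm ι, α ^ (Fintype.card ι - cycleCount σ) * ∏ i, A i (σ i)

/-!
Write `α = ε / k` with `ε = ±1` and `k = m + 1`. Since `k ^ c(σ)` counts the colourings
`f : ι → Fin k` that are constant on the cycles of `σ`,
`k ^ n * det_α(A) = ∑_f det_ε(A ⊙ M_f)` with `M_f i j = [f i = f j]`.
Each `A ⊙ M_f` is positive semidefinite (Schur product theorem), and `det_ε` is the permanent for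
`ε = 1` and the determinant for `ε = -1`. Both are nonnegative on positive semidefinite matrices;
for the permanent this follows from `n! * per(Bᴴ B) = ∑_g |per(B_g)|²`, where `B_g` has rows
`B (g i)`.
-/

open Finset

namespace Equiv.Perm

variable {ι : Type*} [Fintype ι] [DecidableEq ι]

lemma card_cycleType_le_sum_cycleType (σ : Perm ι) :
    Multiset.card σ.cycleType ≤ σ.cycleType.sum := by
  simpa using Multiset.card_nsmul_le_sum (a := 1) fun _ h ↦ (one_lt_of_mem_cycleType h).le

lemma cycleCount_le_card (σ : Perm ι) : cycleCount σ ≤ Fintype.card ι := by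
  have := card_cycleType_le_sum_cycleType σ
  have := sum_cycleType_le σ
  unfold cycleCount
  omega

lemma sign_eq_neg_one_pow_card_sub_cycleCount (σ : Perm ι) :
    sign σ = (-1) ^ (Fintype.card ι - cycleCount σ) := by
  obtain ⟨d, hd⟩ := Nat.exists_eq_add_of_le (card_cycleType_le_sum_cycleType σ)
  have hsum := sum_cycleType_le σ
  have hcard : Fintype.card ι - cycleCount σ = d := by unfold cycleCount; omega
  rw [sign_of_cycleType, hcard, hd, add_right_comm, ← two_mul, pow_add, pow_mul, Int.units_sq,
    one_pow, one_mul]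

omit [Fintype ι] [DecidableEq ι] in
lemma apply_eq_of_sameCycle {κ : Type*} {f : ι → κ} {σ : Perm ι} (hf : ∀ x, f (σ x) = f x)
    {x y : ι} (h : σ.SameCycle x y) : f x = f y := by
  obtain ⟨i, rfl⟩ := h
  induction i using Int.induction_on generalizing x with
  | zero => simp
  | succ i ih => rw [zpow_add_one, mul_apply, ← ih, hf]
  | pred i ih =>
    rw [zpow_sub_one, mul_apply, ← ih]
    simpa using hf (σ⁻¹ x)

def invariantFunEquiv (σ : Perm ι) (κ : Type*) :
    {f : ι → κ // ∀ x, f (σ x) = f x} ≃ (Quotient (SameCycle.setoid σ) → κ) where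
  toFun f := Quotient.lift f.1 fun _ _ ↦ apply_eq_of_sameCycle f.2
  invFun g := ⟨fun x ↦ g (Quotient.mk _ x),
    fun _ ↦ congrArg g (Quotient.sound (sameCycle_apply_left.mpr SameCycle.rfl))⟩
  left_inv _ := rfl
  right_inv _ := funext fun q ↦ Quotient.inductionOn q fun _ ↦ rfl

noncomputable def fixedPointOrCycleOf (σ : Perm ι) (x : ι) :
    Function.fixedPoints σ ⊕ σ.cycleFactorsFinset :=
  if h : Function.IsFixedPt σ x then .inl ⟨x, h⟩
  else .inr ⟨σ.cycleOf x, cycleOf_mem_cycleFactorsFinset_iff.mpr (mem_support.mpr h)⟩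

lemma fixedPointOrCycleOf_eq_iff {σ : Perm ι} {x y : ι} :
    fixedPointOrCycleOf σ x = fixedPointOrCycleOf σ y ↔ σ.SameCycle x y := by
  by_cases hx : Function.IsFixedPt σ x <;> by_cases hy : Function.IsFixedPt σ y <;>
    simp only [fixedPointOrCycleOf, hx, hy, dite_true, dite_false, reduceCtorEq, false_iff,
      Sum.inl.injEq, Sum.inr.injEq, Subtype.mk_eq_mk]
  · exact Subtype.ext_iff.trans ⟨fun h ↦ Eq.sameCycle h σ, fun h ↦ h.eq_of_left hx⟩
  · exact fun h ↦ hy (h.apply_eq_self_iff.mp hx)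
  · exact fun h ↦ hx (h.apply_eq_self_iff.mpr hy)
  · exact (sameCycle_iff_cycleOf_eq_of_mem_support (mem_support.mpr hx) (mem_support.mpr hy)).symm

lemma fixedPointOrCycleOf_surjective (σ : Perm ι) :
    Function.Surjective (fixedPointOrCycleOf σ) := by
  rintro (⟨x, hx⟩ | ⟨c, hc⟩)
  · exact ⟨x, by simp [fixedPointOrCycleOf, show Function.IsFixedPt σ x from hx]⟩
  · obtain ⟨x, hx⟩ := (mem_cycleFactorsFinset_iff.mp hc).1.nonempty_support
    have hσx : ¬Function.IsFixedPt σ x := mem_support.mp (mem_cycleFactorsFinset_support_le hc hx)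
    refine ⟨x, ?_⟩
    simp [fixedPointOrCycleOf, hσx, (eq_cycleOf_of_mem_cycleFactorsFinset_iff σ c hc x).mpr hx]

noncomputable def sameCycleQuotientEquiv (σ : Perm ι) :
    Quotient (SameCycle.setoid σ) ≃ Function.fixedPoints σ ⊕ σ.cycleFactorsFinset :=
  Equiv.ofBijective
    (Quotient.lift (fixedPointOrCycleOf σ) fun _ _ ↦ fixedPointOrCycleOf_eq_iff.mpr)
    ⟨fun p q ↦ Quotient.inductionOn₂ p q fun _ _ h ↦
        Quotient.sound (fixedPointOrCycleOf_eq_iff.mp h),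
      (fixedPointOrCycleOf_surjective σ).of_comp (g := Quotient.mk _)⟩

lemma natCard_quotient_sameCycle (σ : Perm ι) :
    Nat.card (Quotient (SameCycle.setoid σ)) = cycleCount σ := by
  rw [Nat.card_congr (sameCycleQuotientEquiv σ), Nat.card_sum, Nat.card_eq_fintype_card,
    card_fixedPoints, Nat.card_eq_fintype_card, Fintype.card_coe, cycleCount, cycleType_def,
    Multiset.card_map]
  rfl

lemma natCard_invariantFun (σ : Perm ι) (κ : Type*) :
    Nat.card {f : ι → κ // ∀ x, f (σ x) = f x} = Nat.card κ ^ cycleCount σ := by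
  rw [Nat.card_congr (invariantFunEquiv σ κ), Nat.card_fun, natCard_quotient_sameCycle]

lemma sum_boole_invariantFun {R : Type*} [CommSemiring R] (σ : Perm ι) (κ : Type*) [Fintype κ]
    [DecidableEq κ] :
    ∑ f : ι → κ, (if ∀ x, f (σ x) = f x then (1 : R) else 0) =
      (Fintype.card κ : R) ^ cycleCount σ := by
  rw [sum_boole, ← Fintype.card_subtype, ← Nat.card_eq_fintype_card, natCard_invariantFun,
    Nat.card_eq_fintype_card]
  push_cast
  rfl

end Equiv.Perm

open Matrix

namespace Matrix

variable {ι κ R : Type*} [Fintype ι]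

section Permanent

variable [DecidableEq ι] [CommRing R] [StarRing R]

theorem card_perm_smul_permanent_conjTranspose_mul_self [Fintype κ] (B : Matrix κ ι R) :
    Fintype.card (Equiv.Perm ι) • (Bᴴ * B).permanent =
      ∑ g : ι → κ, star (B.submatrix g id).permanent * (B.submatrix g id).permanent := by
  calc Fintype.card (Equiv.Perm ι) • (Bᴴ * B).permanent
      = ∑ τ : Equiv.Perm ι, ((Bᴴ * B).submatrix id τ).permanent := by
        simp only [permanent_permute_rows, sum_const, card_univ]
    _ = ∑ τ : Equiv.Perm ι, ∑ σ : Equiv.Perm ι, ∑ g : ι → κ,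
          (∏ i, star (B (g i) (σ i))) * ∏ i, B (g i) (τ i) := by
        simp only [permanent, submatrix_apply, id, mul_apply, conjTranspose_apply, Fintype.prod_sum,
          prod_mul_distrib]
    _ = ∑ g : ι → κ, star (B.submatrix g id)ᵀ.permanent * (B.submatrix g id)ᵀ.permanent := by
        simp only [permanent, transpose_apply, submatrix_apply, id, star_sum, star_prod,
          sum_mul_sum]
        rw [sum_comm]
        exact (sum_congr rfl fun _ _ ↦ sum_comm).trans sum_comm
    _ = _ := by simp only [permanent_transpose]

end Permanent

theorem PosSemidef.permanent_nonneg [DecidableEq ι] {𝕜 : Type*} [RCLike 𝕜] {A : Matrix ι ι 𝕜}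
    (hA : A.PosSemidef) : 0 ≤ A.permanent := by
  open scoped MatrixOrder in
  obtain ⟨B, rfl⟩ := CStarAlgebra.nonneg_iff_eq_star_mul_self.mp hA.nonneg
  have : 0 ≤ Fintype.card (Equiv.Perm ι) • (Bᴴ * B).permanent := by
    rw [card_perm_smul_permanent_conjTranspose_mul_self]
    exact sum_nonneg fun _ _ ↦ star_mul_self_nonneg _
  rw [nsmul_eq_mul] at this
  exact le_of_mul_le_mul_left (by rwa [mul_zero]) (Nat.cast_pos.mpr Fintype.card_pos)

variable [DecidableEq κ]

def blockMask [Zero R] [One R] (f : ι → κ) : Matrix ι ι R :=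
  of fun i j ↦ if f i = f j then 1 else 0

theorem posSemidef_blockMask [CommRing R] [PartialOrder R] [StarRing R] [StarOrderedRing R]
    [Fintype κ] (f : ι → κ) : (blockMask f : Matrix ι ι R).PosSemidef := by
  let χ : Matrix κ ι R := of fun c i ↦ if f i = c then 1 else 0
  have : blockMask f = χᴴ * χ := by
    ext i j
    simp [χ, blockMask, mul_apply, apply_ite star, eq_comm]
  exact this ▸ posSemidef_conjTranspose_mul_self χ

theorem prod_blockMask_apply [CommRing R] (f : ι → κ) (σ : Equiv.Perm ι) :
    ∏ i, (blockMask f : Matrix ι ι R) i (σ i) = if ∀ x, f (σ x) = f x then 1 else 0 := by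
  simp only [blockMask, of_apply, prod_boole, mem_univ, true_implies, eq_comm]

end Matrix

variable {ι κ R : Type*} [Fintype ι] [DecidableEq ι] [CommRing R]

theorem card_pow_mul_detAlpha_eq_sum [Fintype κ] [DecidableEq κ] (α : R) (A : Matrix ι ι R) :
    (Fintype.card κ : R) ^ Fintype.card ι * detAlpha α A =
      ∑ f : ι → κ, detAlpha (Fintype.card κ * α) (A ⊙ blockMask f) := by
  simp only [detAlpha, hadamard_apply, prod_mul_distrib, prod_blockMask_apply, mul_sum]
  rw [sum_comm]
  refine sum_congr rfl fun σ _ ↦ ?_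
  rw [← mul_sum, ← mul_sum, Equiv.Perm.sum_boole_invariantFun, mul_pow,
    ← pow_mul_pow_sub _ σ.cycleCount_le_card]
  ring

theorem detAlpha_one (A : Matrix ι ι R) : detAlpha 1 A = A.permanent := by
  rw [← permanent_transpose]
  simp [detAlpha, permanent]

theorem detAlpha_neg_one (A : Matrix ι ι R) : detAlpha (-1) A = A.det := by
  rw [← det_transpose, det_apply']
  simp [detAlpha, Equiv.Perm.sign_eq_neg_one_pow_card_sub_cycleCount]

theorem detAlpha_nonneg_of_posSemidef {𝕜 : Type*} [RCLike 𝕜] {k : ℕ} (hk : 0 < k) {α : 𝕜}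
    (hα : k * α = 1 ∨ k * α = -1) {A : Matrix ι ι 𝕜} (hA : A.PosSemidef) : 0 ≤ detAlpha α A := by
  have hsum :
      0 ≤ ∑ f : ι → Fin k, detAlpha ((Fintype.card (Fin k) : 𝕜) * α) (A ⊙ blockMask f) := by
    refine sum_nonneg fun f _ ↦ ?_
    have hAf := hA.hadamard (posSemidef_blockMask f)
    rw [Fintype.card_fin]
    rcases hα with h | h <;> rw [h]
    · exact detAlpha_one (A ⊙ blockMask f) ▸ hAf.permanent_nonneg
    · exact detAlpha_neg_one (A ⊙ blockMask f) ▸ hAf.det_nonneg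
  rw [← card_pow_mul_detAlpha_eq_sum, Fintype.card_fin] at hsum
  exact le_of_mul_le_mul_left (by rwa [mul_zero]) (pow_pos (Nat.cast_pos.mpr hk) _)

/-- For `α = 1/(m+1)` or `α = -1/(m+1)`, `det_α(A) ≥ 0` for every complex Hermitian positive
semidefinite matrix `A` of every size. -/
theorem detAlpha_nonneg_of_psd_complex (m : ℕ) (α : ℝ)
    (hα : α = 1 / ((m : ℝ) + 1) ∨ α = -1 / ((m : ℝ) + 1)) :
    ∀ (N : ℕ) (A : Matrix (Fin N) (Fin N) ℂ), A.PosSemidef → 0 ≤ detAlpha (α : ℂ) A := by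
  intro N A hA
  refine detAlpha_nonneg_of_posSemidef m.succ_pos ?_ hA
  have hm : (m : ℂ) + 1 ≠ 0 := by exact_mod_cast m.succ_ne_zero
  rcases hα with rfl | rfl
  · exact .inl (by push_cast; field_simp)
  · exact .inr (by push_cast; field_simp)
end

section
/- Let 1 ≤ k ≤ n−1. Then the function x ↦ e_{k+1}(x)/e_k(x) is concave on (0,∞)^n, where e_j denotes the j-th elementary symmetric polynomial in x = (x_1,…,x_n). (The denominator e_k(x) is strictly positive on (0,∞)^n.) -/
/-!
The ratio `e_{k+1}/e_k` is positively homogeneous of degree one, so on the positive orthant its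
concavity amounts to superadditivity (Marcus–Lopes). That is proved by induction on `k`. With the
parallel sum `a ∥ b = a b / (a + b)`, the identities
`e_{k+2}(A) = e_{k+2}(A \ i) + xᵢ e_{k+1}(A \ i)` and `∑ᵢ xᵢ e_{k+1}(A \ i) = (k + 2) e_{k+2}(A)`
give `(k + 2) e_{k+2}(A) / e_{k+1}(A) = ∑_{i ∈ A} xᵢ ∥ (e_{k+1} / e_k)(A \ i)`; since `∥` is
monotone and superadditive, the induction hypothesis applied to each `A \ i` bounds every summand.
-/

open Finset

variable {ι R 𝕜 E : Type*}

section ParallelSum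

def parallelSum [Field 𝕜] (a b : 𝕜) : 𝕜 := a * b / (a + b)

variable [Field 𝕜] [LinearOrder 𝕜] [IsStrictOrderedRing 𝕜]

theorem parallelSum_le_parallelSum_right {a b b' : 𝕜} (ha : 0 < a) (hb : 0 ≤ b) (hbb' : b ≤ b') :
    parallelSum a b ≤ parallelSum a b' := by
  unfold parallelSum
  rw [div_le_div_iff₀ (by linarith) (by linarith)]
  nlinarith [mul_pos ha ha]

theorem parallelSum_add_parallelSum_le {a b c d : 𝕜} (ha : 0 < a) (hb : 0 ≤ b) (hc : 0 < c)
    (hd : 0 ≤ d) : parallelSum a b + parallelSum c d ≤ parallelSum (a + c) (b + d) := by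
  unfold parallelSum
  rw [div_add_div _ _ (by positivity) (by positivity), div_le_div_iff₀ (by positivity)
    (by positivity)]
  -- after clearing denominators the two sides differ by `(a * d - b * c) ^ 2`
  nlinarith [sq_nonneg (a * d - b * c)]

end ParallelSum

namespace Finset

def esymm [CommSemiring R] (A : Finset ι) (k : ℕ) (x : ι → R) : R :=
  ∑ s ∈ A.powersetCard k, ∏ i ∈ s, x i

section CommSemiring

variable [CommSemiring R] {A : Finset ι} {k : ℕ} {x : ι → R}

@[simp]
theorem esymm_zero (A : Finset ι) (x : ι → R) : A.esymm 0 x = 1 := by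
  simp [esymm]

@[simp]
theorem esymm_one (A : Finset ι) (x : ι → R) : A.esymm 1 x = ∑ i ∈ A, x i := by
  simp [esymm, powersetCard_one]

theorem esymm_eq_zero_of_card_lt (h : A.card < k) : A.esymm k x = 0 := by
  simp [esymm, powersetCard_eq_empty.2 h]

theorem esymm_smul (A : Finset ι) (k : ℕ) (c : R) (x : ι → R) :
    A.esymm k (c • x) = c ^ k * A.esymm k x := by
  rw [esymm, esymm, mul_sum]
  refine sum_congr rfl fun s hs => ?_
  simp only [Pi.smul_apply, smul_eq_mul, prod_mul_distrib, prod_const, (mem_powersetCard.1 hs).2]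

variable [DecidableEq ι]

theorem esymm_insert {i : ι} (hi : i ∉ A) (k : ℕ) (x : ι → R) :
    (insert i A).esymm (k + 1) x = A.esymm (k + 1) x + x i * A.esymm k x := by
  have hiA : ∀ s ∈ A.powersetCard k, i ∉ s := fun s hs h => hi ((mem_powersetCard.1 hs).1 h)
  rw [esymm, powersetCard_succ_insert hi, sum_union, sum_image, esymm, esymm, mul_sum]
  · exact congrArg _ (sum_congr rfl fun s hs => prod_insert (hiA s hs))
  · intro s hs t ht hst
    rw [← erase_insert (hiA s hs), ← erase_insert (hiA t ht), hst]
  · refine disjoint_right.2 fun s hs hs' => ?_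
    obtain ⟨t, -, rfl⟩ := mem_image.1 hs
    exact hi ((mem_powersetCard.1 hs').1 (mem_insert_self i t))

theorem esymm_erase {i : ι} (hi : i ∈ A) (k : ℕ) (x : ι → R) :
    A.esymm (k + 1) x = (A.erase i).esymm (k + 1) x + x i * (A.erase i).esymm k x := by
  conv_lhs => rw [← insert_erase hi]
  exact esymm_insert (notMem_erase i A) k x

theorem sum_mul_esymm_erase (A : Finset ι) (k : ℕ) (x : ι → R) :
    ∑ i ∈ A, x i * (A.erase i).esymm k x = (k + 1) * A.esymm (k + 1) x := by
  induction A using Finset.induction_on generalizing k with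
  | empty => rw [sum_empty, esymm_eq_zero_of_card_lt (by simp), mul_zero]
  | insert a B ha ih =>
    cases k with
    | zero => simp [sum_insert ha]
    | succ k =>
      have hsplit : ∀ i ∈ B, (insert a B).erase i = insert a (B.erase i) := fun i hi =>
        erase_insert_of_ne (ne_of_mem_of_not_mem hi ha).symm
      rw [sum_insert ha, erase_insert ha, sum_congr rfl fun i hi => by
        rw [hsplit i hi, esymm_insert (fun h => ha (mem_of_mem_erase h))], esymm_insert ha]
      simp only [mul_add, sum_add_distrib, mul_left_comm _ (x a), ← mul_sum, ih]
      push_cast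
      ring

end CommSemiring

section Field

variable [Field 𝕜] {A : Finset ι} {k : ℕ}

variable (A k) in
def esymmRatio (x : ι → 𝕜) : 𝕜 := A.esymm (k + 1) x / A.esymm k x

theorem esymmRatio_eq_zero_of_card_le (h : A.card ≤ k) (x : ι → 𝕜) : A.esymmRatio k x = 0 := by
  rw [esymmRatio, esymm_eq_zero_of_card_lt (Nat.lt_succ_of_le h), zero_div]

theorem esymmRatio_smul {c : 𝕜} (hc : c ≠ 0) (x : ι → 𝕜) :
    A.esymmRatio k (c • x) = c * A.esymmRatio k x := by
  rw [esymmRatio, esymmRatio, esymm_smul, esymm_smul, pow_succ', mul_assoc, mul_div_assoc,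
    mul_div_mul_left _ _ (pow_ne_zero k hc)]

end Field

section OrderedField

variable [Field 𝕜] [LinearOrder 𝕜] [IsStrictOrderedRing 𝕜] {A : Finset ι} {k : ℕ} {x y : ι → 𝕜}

theorem esymm_nonneg (hx : ∀ i ∈ A, 0 ≤ x i) : 0 ≤ A.esymm k x :=
  sum_nonneg fun _ hs => prod_nonneg fun i hi => hx i ((mem_powersetCard.1 hs).1 hi)

theorem esymm_pos (hk : k ≤ A.card) (hx : ∀ i ∈ A, 0 < x i) : 0 < A.esymm k x :=
  sum_pos (fun _ hs => prod_pos fun i hi => hx i ((mem_powersetCard.1 hs).1 hi))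
    (powersetCard_nonempty.2 hk)

theorem esymmRatio_nonneg (hx : ∀ i ∈ A, 0 ≤ x i) : 0 ≤ A.esymmRatio k x :=
  div_nonneg (esymm_nonneg hx) (esymm_nonneg hx)

variable [DecidableEq ι]

theorem cast_add_two_mul_esymmRatio_eq_sum (hk : k + 1 ≤ A.card) (hx : ∀ i ∈ A, 0 < x i) :
    ((k : 𝕜) + 2) * A.esymmRatio (k + 1) x
      = ∑ i ∈ A, parallelSum (x i) ((A.erase i).esymmRatio k x) := by
  have hsum := sum_mul_esymm_erase A (k + 1) x
  push_cast at hsum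
  rw [esymmRatio, ← mul_div_assoc, show (k : 𝕜) + 2 = k + 1 + 1 by ring, ← hsum, sum_div]
  refine sum_congr rfl fun i hi => ?_
  have hk' : k ≤ (A.erase i).card := by rw [card_erase_of_mem hi]; omega
  have hpos : 0 < (A.erase i).esymm k x := esymm_pos hk' fun j hj => hx j (mem_of_mem_erase hj)
  have hxi := hx i hi
  rw [esymm_erase hi, esymmRatio, parallelSum]
  field_simp
  ring

theorem esymmRatio_add_le (hx : ∀ i ∈ A, 0 < x i) (hy : ∀ i ∈ A, 0 < y i) :
    A.esymmRatio k x + A.esymmRatio k y ≤ A.esymmRatio k (x + y) := by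
  induction k generalizing A with
  | zero => simp [esymmRatio, sum_add_distrib]
  | succ k ih =>
    rcases le_or_gt A.card (k + 1) with hA | hA
    · simp [esymmRatio_eq_zero_of_card_le hA]
    have hxy : ∀ i ∈ A, 0 < (x + y) i := fun i hi => add_pos (hx i hi) (hy i hi)
    refine le_of_mul_le_mul_left ?_ (by positivity : (0 : 𝕜) < k + 2)
    rw [mul_add, cast_add_two_mul_esymmRatio_eq_sum hA.le hx,
      cast_add_two_mul_esymmRatio_eq_sum hA.le hy, cast_add_two_mul_esymmRatio_eq_sum hA.le hxy,
      ← sum_add_distrib]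
    refine sum_le_sum fun i hi => ?_
    have erase_pos {z : ι → 𝕜} (hz : ∀ i ∈ A, 0 < z i) : ∀ j ∈ A.erase i, 0 < z j :=
      fun j hj => hz j (mem_of_mem_erase hj)
    have hrx := esymmRatio_nonneg (k := k) fun j hj => (erase_pos hx j hj).le
    have hry := esymmRatio_nonneg (k := k) fun j hj => (erase_pos hy j hj).le
    calc parallelSum (x i) ((A.erase i).esymmRatio k x)
          + parallelSum (y i) ((A.erase i).esymmRatio k y)
        ≤ parallelSum (x i + y i) ((A.erase i).esymmRatio k x + (A.erase i).esymmRatio k y) :=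
          parallelSum_add_parallelSum_le (hx i hi) hrx (hy i hi) hry
      _ ≤ parallelSum ((x + y) i) ((A.erase i).esymmRatio k (x + y)) :=
          parallelSum_le_parallelSum_right (hxy i hi) (add_nonneg hrx hry)
            (ih (erase_pos hx) (erase_pos hy))

end OrderedField

end Finset

theorem concaveOn_of_superadditive_of_homogeneous [Field 𝕜] [LinearOrder 𝕜]
    [IsStrictOrderedRing 𝕜] [AddCommMonoid E] [Module 𝕜 E] {s : Set E} {f : E → 𝕜} (hs : Convex 𝕜 s)
    (hs_smul : ∀ x ∈ s, ∀ c : 𝕜, 0 < c → c • x ∈ s)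
    (hf_add : ∀ x ∈ s, ∀ y ∈ s, f x + f y ≤ f (x + y))
    (hf_smul : ∀ x ∈ s, ∀ c : 𝕜, 0 < c → f (c • x) = c * f x) : ConcaveOn 𝕜 s f := by
  refine ⟨hs, fun x hx y hy a b ha hb hab => ?_⟩
  rcases ha.eq_or_lt with rfl | ha
  · simp [show b = 1 by linarith]
  rcases hb.eq_or_lt with rfl | hb
  · simp [show a = 1 by linarith]
  calc a • f x + b • f y = f (a • x) + f (b • y) := by
        rw [hf_smul x hx a ha, hf_smul y hy b hb, smul_eq_mul, smul_eq_mul]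
    _ ≤ f (a • x + b • y) := hf_add _ (hs_smul x hx a ha) _ (hs_smul y hy b hb)

theorem esymm_ratio_concave_general (n k : ℕ) :
    ConcaveOn ℝ (Set.univ.pi fun _ : Fin n => Set.Ioi (0 : ℝ))
      (fun x : Fin n → ℝ =>
        (∑ s ∈ Finset.univ.powersetCard (k + 1), ∏ i ∈ s, x i) /
        (∑ s ∈ Finset.univ.powersetCard k, ∏ i ∈ s, x i)) := by
  have hpos {x : Fin n → ℝ} (hx : x ∈ Set.univ.pi fun _ => Set.Ioi 0) : ∀ i ∈ univ, 0 < x i :=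
    fun i _ => hx i (Set.mem_univ i)
  refine concaveOn_of_superadditive_of_homogeneous (f := univ.esymmRatio k)
    (convex_pi fun _ _ => convex_Ioi 0) (fun x hx c hc i _ => mul_pos hc (hpos hx i (mem_univ i)))
    (fun x hx y hy => esymmRatio_add_le (hpos hx) (hpos hy))
    (fun x _ c hc => esymmRatio_smul hc.ne' x)

/-- For `1 ≤ k ≤ n - 1`, the symmetric function mean `x ↦ e_{k+1}(x) / e_k(x)` is concave
on the open positive orthant, where `e_j` is the `j`-th elementary symmetric polynomial. -/
theorem esymm_ratio_concave (n k : ℕ) (hk1 : 1 ≤ k) (hk2 : k ≤ n - 1) :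
    ConcaveOn ℝ (Set.univ.pi fun _ : Fin n => Set.Ioi (0 : ℝ))
      (fun x : Fin n → ℝ =>
        (∑ s ∈ Finset.univ.powersetCard (k + 1), ∏ i ∈ s, x i) /
        (∑ s ∈ Finset.univ.powersetCard k, ∏ i ∈ s, x i)) :=
  esymm_ratio_concave_general n k
end
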